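/- arXiv:2301.06842 — 3 statements merged into one kernel-verified Lean document; each statement's English description precedes it below -/
import Mathlib

section
/- The set {X ∈ 𝒢 : X̂ V = V X for all V ∈ 𝒢^1} is equal to Λ_r. -/
open Pointwise

noncomputable section

namespace ClGA

variable (𝔽 : Type*) [RCLike 𝔽] (p q r : ℕ)

/-- The diagonal weights: `p` ones, `q` minus-ones, `r` zeros. -/
def w : Fin (p + q + r) → 𝔽 := fun i =>
  if (i : ℕ) < p then 1 else if (i : ℕ) < p + q then -1 else 0

/-- The quadratic form on `𝔽^n` whose Gram matrix is `diag(1,…,1,−1,…,−1,0,…,0)`. -/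
def Q : QuadraticForm 𝔽 (Fin (p + q + r) → 𝔽) :=
  QuadraticMap.weightedSumSquares 𝔽 (w 𝔽 p q r)

/-- The degenerate Clifford geometric algebra `𝒢 = 𝒢_{p,q,r}`. -/
abbrev G := CliffordAlgebra (Q 𝔽 p q r)

/-- The generators `e_a`, `a = 1, …, n`. -/
def e (a : Fin (p + q + r)) : G 𝔽 p q r :=
  CliffordAlgebra.ι (Q 𝔽 p q r) (Pi.single a 1)

/-- The even subspace `𝒢^{(0)}`: the `+1`-eigenspace of the grade involution. -/
def Geven : Submodule 𝔽 (G 𝔽 p q r) where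
  carrier := {x | CliffordAlgebra.involute x = x}
  add_mem' := by
    intro a b ha hb
    simp only [Set.mem_setOf_eq, map_add] at ha hb ⊢
    rw [ha, hb]
  zero_mem' := by simp
  smul_mem' := by
    intro c x hx
    simp only [Set.mem_setOf_eq, map_smul] at hx ⊢
    rw [hx]

/-- The odd subspace `𝒢^{(1)}`: the `−1`-eigenspace of the grade involution. -/
def Godd : Submodule 𝔽 (G 𝔽 p q r) where
  carrier := {x | CliffordAlgebra.involute x = -x}
  add_mem' := by
    intro a b ha hb
    simp only [Set.mem_setOf_eq, map_add] at ha hb ⊢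
    rw [ha, hb, neg_add]
  zero_mem' := by simp
  smul_mem' := by
    intro c x hx
    simp only [Set.mem_setOf_eq, map_smul] at hx ⊢
    rw [hx, smul_neg]

/-- The grade-1 subspace `𝒢^1`, the span of the generators. -/
def G1 : Submodule 𝔽 (G 𝔽 p q r) := Submodule.span 𝔽 (Set.range (e 𝔽 p q r))

/-- The scalar (grade-0) subspace `𝒢^0 = 𝔽·1`. -/
def G0 : Submodule 𝔽 (G 𝔽 p q r) := Submodule.span 𝔽 {(1 : G 𝔽 p q r)}

/-- The element `e_{1…n} = e_1 e_2 ⋯ e_n`. -/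
def eTop : G 𝔽 p q r := (List.ofFn (e 𝔽 p q r)).prod

/-- The grade-`n` subspace `𝒢^n = 𝔽·e_{1…n}`. -/
def Gn : Submodule 𝔽 (G 𝔽 p q r) := Submodule.span 𝔽 {eTop 𝔽 p q r}

/-- The Grassmann subalgebra `Λ_r` generated by the null generators. -/
def Λr : Subalgebra 𝔽 (G 𝔽 p q r) :=
  Algebra.adjoin 𝔽 {x | ∃ a : Fin (p + q + r), p + q ≤ (a : ℕ) ∧ x = e 𝔽 p q r a}

/-- `Λ_r` viewed as a subspace of `𝒢`. -/
def Λrs : Submodule 𝔽 (G 𝔽 p q r) := Subalgebra.toSubmodule (Λr 𝔽 p q r)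

/-- The even part `Λ_r^{(0)} = Λ_r ∩ 𝒢^{(0)}`. -/
def Λr0 : Submodule 𝔽 (G 𝔽 p q r) := Λrs 𝔽 p q r ⊓ Geven 𝔽 p q r

/-- The Jacobson radical `rad 𝒢` of `𝒢`: the two-sided ideal generated by the
null generators. -/
def radG : Submodule 𝔽 (G 𝔽 p q r) :=
  Submodule.span 𝔽 {x | ∃ (u v : G 𝔽 p q r) (a : Fin (p + q + r)),
    p + q ≤ (a : ℕ) ∧ x = u * e 𝔽 p q r a * v}

/-- `rad 𝒢^{(0)} = rad 𝒢 ∩ 𝒢^{(0)}`. -/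
def radG0 : Submodule 𝔽 (G 𝔽 p q r) := radG 𝔽 p q r ⊓ Geven 𝔽 p q r

/-- For a subset `S ⊆ 𝒢`, `S^×` denotes those elements of `S` invertible in `𝒢`. -/
def ux (S : Set (G 𝔽 p q r)) : Set (G 𝔽 p q r) := {x ∈ S | IsUnit x}

/-- `𝒢^{(0)×} ∪ 𝒢^{(1)×}` (the group `P^±_{p,q,r}`). -/
def Epm : Set (G 𝔽 p q r) :=
  ux 𝔽 p q r ↑(Geven 𝔽 p q r) ∪ ux 𝔽 p q r ↑(Godd 𝔽 p q r)

/-- `(T⁻¹)^̂ · T`, the grade involution of the inverse times `T`. -/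
def tw (T : G 𝔽 p q r) : G 𝔽 p q r :=
  CliffordAlgebra.involute (Ring.inverse T) * T

/-- The invertible elements `T` with `T W T⁻¹ ⊆ W` (adjoint representation). -/
def gammaAd (W : Submodule 𝔽 (G 𝔽 p q r)) : Set (G 𝔽 p q r) :=
  {T | IsUnit T ∧ ∀ U ∈ W, T * U * Ring.inverse T ∈ W}

/-- The invertible elements `T` with `T̂ W T⁻¹ ⊆ W` (twisted adjoint representation). -/
def gammaTw (W : Submodule 𝔽 (G 𝔽 p q r)) : Set (G 𝔽 p q r) :=
  {T | IsUnit T ∧ ∀ U ∈ W, CliffordAlgebra.involute T * U * Ring.inverse T ∈ W}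

/-!
For fixed `y`, the `x` with `x̂ y = y x` form a subalgebra, the twisted centralizer of `y`.
A null generator is orthogonal to every vector, so `Λ_r` lies in the twisted centralizer of
every `V ∈ 𝒢^1`. Conversely, remove the non-null generators `e = e_a` one at a time. If `A` is
an involution-stable subalgebra whose elements satisfy `x̂ e = e x`, the algebra generated by `A`
and `e` is `A + e A`, and for `X = a + e b` the relation `X̂ e = e X` reads
`e a - e² b = e a + e² b`; since `e² = ±1`, this forces `b = 0`.
-/

section TwistedCentralizer

open CliffordAlgebra

variable {R M : Type*} [CommRing R] [AddCommGroup M] [Module R M] {Q : QuadraticForm R M}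

def twistedCentralizer (y : CliffordAlgebra Q) : Subalgebra R (CliffordAlgebra Q) where
  carrier := {x | involute x * y = y * x}
  mul_mem' {a b} ha hb := by
    simp only [Set.mem_ofPred_eq, map_mul] at *
    rw [mul_assoc, hb, ← mul_assoc, ha, mul_assoc]
  add_mem' ha hb := by
    simp only [Set.mem_ofPred_eq, map_add, add_mul, mul_add] at *
    rw [ha, hb]
  algebraMap_mem' c := by simp [Algebra.commutes]

theorem mem_twistedCentralizer {x y : CliffordAlgebra Q} :
    x ∈ twistedCentralizer y ↔ involute x * y = y * x := Iff.rfl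

theorem adjoin_ι_image_le_twistedCentralizer {S : Set M} {v : M} (h : ∀ m ∈ S, Q.IsOrtho m v) :
    Algebra.adjoin R (ι Q '' S) ≤ twistedCentralizer (ι Q v) := by
  refine Algebra.adjoin_le ?_
  rintro _ ⟨m, hm, rfl⟩
  rw [SetLike.mem_coe, mem_twistedCentralizer, involute_ι, neg_mul, ι_mul_ι_comm_of_isOrtho (h m hm),
    neg_neg]

theorem involute_mem_adjoin_ι_image {S : Set M} {x : CliffordAlgebra Q}
    (hx : x ∈ Algebra.adjoin R (ι Q '' S)) : involute x ∈ Algebra.adjoin R (ι Q '' S) := by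
  suffices Algebra.adjoin R (ι Q '' S) ≤ (Algebra.adjoin R (ι Q '' S)).comap involute from this hx
  refine Algebra.adjoin_le ?_
  rintro _ ⟨m, hm, rfl⟩
  rw [SetLike.mem_coe, Subalgebra.mem_comap, involute_ι]
  exact neg_mem (Algebra.subset_adjoin ⟨m, hm, rfl⟩)

theorem exists_add_ι_mul_of_mem_adjoin_insert {v : M} {A : Subalgebra R (CliffordAlgebra Q)}
    (hinv : ∀ x ∈ A, involute x ∈ A) (hA : A ≤ twistedCentralizer (ι Q v))
    {X : CliffordAlgebra Q} (hX : X ∈ Algebra.adjoin R (insert (ι Q v) (A : Set _))) :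
    ∃ a ∈ A, ∃ b ∈ A, X = a + ι Q v * b := by
  induction hX using Algebra.adjoin_induction with
  | mem x hx =>
    rcases hx with rfl | hx
    · exact ⟨0, zero_mem _, 1, one_mem _, by simp⟩
    · exact ⟨x, hx, 0, zero_mem _, by simp⟩
  | algebraMap c => exact ⟨algebraMap R _ c, A.algebraMap_mem c, 0, zero_mem _, by simp⟩
  | add x y _ _ hx hy =>
    obtain ⟨a, ha, b, hb, rfl⟩ := hx
    obtain ⟨a', ha', b', hb', rfl⟩ := hy
    exact ⟨a + a', add_mem ha ha', b + b', add_mem hb hb', by rw [mul_add]; abel⟩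
  | mul x y _ _ hx hy =>
    obtain ⟨a, ha, b, hb, rfl⟩ := hx
    obtain ⟨a', ha', b', hb', rfl⟩ := hy
    have hcomm : ∀ z ∈ A, z * ι Q v = ι Q v * involute z := fun z hz => by
      have := hA (hinv z hz)
      rwa [mem_twistedCentralizer, involute_involute] at this
    refine ⟨a * a' + Q v • (involute b * b'), add_mem (mul_mem ha ha')
        (Subalgebra.smul_mem _ (mul_mem (hinv b hb) hb') _),
      involute a * b' + b * a', add_mem (mul_mem (hinv a ha) hb') (mul_mem hb ha'), ?_⟩
    calc (a + ι Q v * b) * (a' + ι Q v * b')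
        = a * a' + (a * ι Q v) * b' + ι Q v * (b * a') + ι Q v * (b * ι Q v) * b' := by
          noncomm_ring
      _ = a * a' + ι Q v * (involute a * b') + ι Q v * (b * a')
            + (ι Q v * ι Q v) * (involute b * b') := by
          rw [hcomm a ha, hcomm b hb]
          noncomm_ring
      _ = a * a' + Q v • (involute b * b') + ι Q v * (involute a * b' + b * a') := by
          rw [ι_sq_scalar, ← Algebra.smul_def, mul_add]
          abel

theorem eq_zero_of_add_ι_mul_mem_twistedCentralizer {v : M} (hv : IsUnit (2 * Q v))
    {a b : CliffordAlgebra Q} (ha : a ∈ twistedCentralizer (ι Q v))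
    (hb : b ∈ twistedCentralizer (ι Q v)) (hX : a + ι Q v * b ∈ twistedCentralizer (ι Q v)) :
    b = 0 := by
  rw [mem_twistedCentralizer] at ha hb hX
  have hlhs : involute (a + ι Q v * b) * ι Q v = ι Q v * a - Q v • b := by
    rw [map_add, map_mul, involute_ι, add_mul, ha, neg_mul, neg_mul, mul_assoc, hb, ← mul_assoc,
      ι_sq_scalar, ← Algebra.smul_def, sub_eq_add_neg]
  have hrhs : ι Q v * (a + ι Q v * b) = ι Q v * a + Q v • b := by
    rw [mul_add, ← mul_assoc, ι_sq_scalar, Algebra.smul_def]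
  rw [hlhs, hrhs] at hX
  rw [← hv.smul_eq_zero, mul_smul, two_smul]
  calc Q v • b + Q v • b = (ι Q v * a + Q v • b) - (ι Q v * a - Q v • b) := by abel
    _ = 0 := by rw [hX, sub_self]

theorem mem_of_mem_adjoin_insert_of_mem_twistedCentralizer {v : M} (hv : IsUnit (2 * Q v))
    {A : Subalgebra R (CliffordAlgebra Q)}
    (hinv : ∀ x ∈ A, involute x ∈ A) (hA : A ≤ twistedCentralizer (ι Q v))
    {X : CliffordAlgebra Q} (hX : X ∈ Algebra.adjoin R (insert (ι Q v) (A : Set _)))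
    (hXv : X ∈ twistedCentralizer (ι Q v)) : X ∈ A := by
  obtain ⟨a, ha, b, hb, rfl⟩ := exists_add_ι_mul_of_mem_adjoin_insert hinv hA hX
  rw [eq_zero_of_add_ι_mul_mem_twistedCentralizer hv (hA ha) (hA hb) hXv, mul_zero, add_zero]
  exact ha

theorem mem_adjoin_ι_image_of_mem_twistedCentralizer {S : Set M} {F : Finset M}
    (hunit : ∀ v ∈ F, IsUnit (2 * Q v)) (hS : ∀ m ∈ S, ∀ v ∈ F, Q.IsOrtho m v)
    (hF : (F : Set M).Pairwise Q.IsOrtho) {X : CliffordAlgebra Q}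
    (hX : X ∈ Algebra.adjoin R (ι Q '' (S ∪ F)))
    (hXF : ∀ v ∈ F, X ∈ twistedCentralizer (ι Q v)) : X ∈ Algebra.adjoin R (ι Q '' S) := by
  classical
  induction F using Finset.induction_on with
  | empty => simpa using hX
  | insert v F hvF ih =>
    simp only [Finset.mem_insert, forall_eq_or_imp] at hunit hS hXF
    rw [Finset.coe_insert, Set.pairwise_insert] at hF
    refine ih hunit.2 (fun m hm => (hS m hm).2) hF.1 ?_ hXF.2
    have horth : ∀ m ∈ S ∪ F, Q.IsOrtho m v := by
      rintro m (hm | hm)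
      · exact (hS m hm).1
      · exact (hF.2 m hm (ne_of_mem_of_not_mem hm hvF).symm).2
    have hsub : ι Q '' (S ∪ ↑(insert v F))
        ⊆ insert (ι Q v) ↑(Algebra.adjoin R (ι Q '' (S ∪ ↑F))) := by
      rw [Finset.coe_insert, Set.union_insert, Set.image_insert_eq]
      exact Set.insert_subset_insert Algebra.subset_adjoin
    exact mem_of_mem_adjoin_insert_of_mem_twistedCentralizer hunit.1
      (fun _ => involute_mem_adjoin_ι_image) (adjoin_ι_image_le_twistedCentralizer horth)
      (Algebra.adjoin_mono hsub hX) hXF.1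

end TwistedCentralizer

theorem _root_.QuadraticMap.isOrtho_weightedSumSquares_single {ι R : Type*} [CommRing R] [Fintype ι]
    [DecidableEq ι] (w : ι → R) {i : ι} {m : ι → R} (h : w i * m i = 0) :
    (QuadraticMap.weightedSumSquares R w).IsOrtho (Pi.single i 1) m := by
  rw [QuadraticMap.isOrtho_def]
  simp only [QuadraticMap.weightedSumSquares_apply, ← Finset.sum_add_distrib]
  refine Finset.sum_congr rfl fun j _ => ?_
  rcases eq_or_ne j i with rfl | hj
  · simp only [Pi.add_apply, Pi.single_eq_same, smul_eq_mul]
    linear_combination 2 * h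
  · simp [Pi.single_eq_of_ne hj]

theorem Q_single (a : Fin (p + q + r)) : Q 𝔽 p q r (Pi.single a 1) = w 𝔽 p q r a := by
  rw [Q, QuadraticMap.weightedSumSquares_apply, Finset.sum_eq_single a]
  · simp
  · intro b _ hb
    simp [Pi.single_eq_of_ne hb]
  · simp

theorem G1_le_range_ι : G1 𝔽 p q r ≤ LinearMap.range (CliffordAlgebra.ι (Q 𝔽 p q r)) :=
  Submodule.span_le.mpr (Set.range_subset_iff.mpr fun _ => ⟨_, rfl⟩)

theorem adjoin_ι_image_range_single :
    Algebra.adjoin 𝔽 (CliffordAlgebra.ι (Q 𝔽 p q r) '' Set.range fun a => Pi.single a 1) = ⊤ := by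
  refine top_unique (CliffordAlgebra.adjoin_range_ι (Q := Q 𝔽 p q r) ▸ Algebra.adjoin_le ?_)
  rintro _ ⟨m, rfl⟩
  have hm : m ∈ Submodule.span 𝔽 (Set.range fun a : Fin (p + q + r) => Pi.single a (1 : 𝔽)) := by
    have := (Pi.basisFun 𝔽 (Fin (p + q + r))).mem_span m
    rwa [show ⇑(Pi.basisFun 𝔽 (Fin (p + q + r))) = fun a => Pi.single a 1 from
      funext (Pi.basisFun_apply 𝔽 _)] at this
  refine Algebra.span_le_adjoin 𝔽 _ ?_
  rw [Submodule.span_image]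
  exact Submodule.mem_map_of_mem hm

def nullVectors : Set (Fin (p + q + r) → 𝔽) :=
  (fun a => Pi.single a 1) '' {a | p + q ≤ (a : ℕ)}

def nonNullVectors : Finset (Fin (p + q + r) → 𝔽) :=
  (Finset.univ.filter fun a : Fin (p + q + r) => (a : ℕ) < p + q).image fun a => Pi.single a 1

theorem Λr_eq_adjoin_ι_image_nullVectors :
    Λr 𝔽 p q r = Algebra.adjoin 𝔽 (CliffordAlgebra.ι (Q 𝔽 p q r) '' nullVectors 𝔽 p q r) := by
  rw [Λr, nullVectors, Set.image_image]
  congr 1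
  ext x
  simp [e, eq_comm]

theorem nullVectors_union_nonNullVectors :
    nullVectors 𝔽 p q r ∪ nonNullVectors 𝔽 p q r = Set.range fun a => Pi.single a 1 := by
  ext m
  simp only [nullVectors, nonNullVectors, Set.mem_union, Set.mem_image, Finset.coe_image,
    Finset.coe_filter, Set.mem_range, Set.mem_ofPred_eq, Finset.mem_univ, true_and, ← exists_or]
  exact ⟨fun ⟨a, h⟩ => ⟨a, h.elim And.right And.right⟩,
    fun ⟨a, h⟩ => ⟨a, (le_or_gt (p + q) a).imp (⟨·, h⟩) (⟨·, h⟩)⟩⟩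

theorem isOrtho_of_mem_nullVectors {m : Fin (p + q + r) → 𝔽} (hm : m ∈ nullVectors 𝔽 p q r)
    (v : Fin (p + q + r) → 𝔽) : (Q 𝔽 p q r).IsOrtho m v := by
  obtain ⟨a, ha : p + q ≤ (a : ℕ), rfl⟩ := hm
  refine QuadraticMap.isOrtho_weightedSumSquares_single _ ?_
  rw [w, if_neg (by omega), if_neg (by omega), zero_mul]

theorem isUnit_two_mul_Q_of_mem_nonNullVectors {v : Fin (p + q + r) → 𝔽}
    (hv : v ∈ nonNullVectors 𝔽 p q r) : IsUnit (2 * Q 𝔽 p q r v) := by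
  obtain ⟨a, ha, rfl⟩ := Finset.mem_image.mp hv
  replace ha := (Finset.mem_filter.mp ha).2
  rw [isUnit_iff_ne_zero, Q_single, w]
  split_ifs <;> norm_num

theorem pairwise_isOrtho_nonNullVectors :
    (nonNullVectors 𝔽 p q r : Set (Fin (p + q + r) → 𝔽)).Pairwise (Q 𝔽 p q r).IsOrtho := by
  rintro _ ha _ hb hab
  obtain ⟨a, -, rfl⟩ := Finset.mem_image.mp ha
  obtain ⟨b, -, rfl⟩ := Finset.mem_image.mp hb
  refine QuadraticMap.isOrtho_weightedSumSquares_single _ ?_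
  rw [Pi.single_eq_of_ne (by rintro rfl; exact hab rfl), mul_zero]

theorem stmt1 :
    {X : G 𝔽 p q r | ∀ V ∈ G1 𝔽 p q r, CliffordAlgebra.involute X * V = V * X}
      = (Λr 𝔽 p q r : Set (G 𝔽 p q r)) := by
  ext X
  rw [Set.mem_ofPred_eq, SetLike.mem_coe, Λr_eq_adjoin_ι_image_nullVectors]
  refine ⟨fun hX => ?_, fun hX V hV => ?_⟩
  · have hXe : ∀ v ∈ nonNullVectors 𝔽 p q r,
        X ∈ twistedCentralizer (CliffordAlgebra.ι (Q 𝔽 p q r) v) := by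
      intro v hv
      obtain ⟨a, -, rfl⟩ := Finset.mem_image.mp hv
      exact hX _ (Submodule.subset_span ⟨a, rfl⟩)
    refine mem_adjoin_ι_image_of_mem_twistedCentralizer
      (fun _ => isUnit_two_mul_Q_of_mem_nonNullVectors 𝔽 p q r)
      (fun _ hm v _ => isOrtho_of_mem_nullVectors 𝔽 p q r hm v)
      (pairwise_isOrtho_nonNullVectors 𝔽 p q r) ?_ hXe
    rw [nullVectors_union_nonNullVectors, adjoin_ι_image_range_single]
    trivial
  · obtain ⟨m, rfl⟩ := G1_le_range_ι 𝔽 p q r hV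
    exact adjoin_ι_image_le_twistedCentralizer
      (fun _ hn => isOrtho_of_mem_nullVectors 𝔽 p q r hn m) hX

end ClGA
end
end

section
/- The kernel of the adjoint representation, {T ∈ 𝒢^× : T U T^{-1} = U for all U ∈ 𝒢}, is equal to (Λ_r^{(0)} + 𝒢^n)^× if n is odd, and is equal to Λ_r^{(0)×} if n is even. -/
open Pointwise

noncomputable section

namespace ClGA

variable (𝔽 : Type*) [RCLike 𝔽] (p q r : ℕ)

/-! The kernel of the adjoint representation is the group of invertible central elements, so the
theorem describes the centre of `𝒢`. The ordered monomials `e_S` span `𝒢`, and there are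
`2^n = dim 𝒢` of them (the dimension is that of the exterior algebra), so they form a basis.
Commutation with `e_a` sends `e_S` to a multiple of the single monomial `e_{S ∆ {a}}`, and
`S ↦ S ∆ {a}` is injective; hence an element is central iff every monomial in its support is.
Finally `e_S e_a = (-1)^{|S \ {a}|} e_a e_S`, and `e_a e_S = 0` only when `a ∈ S` is null, so
`e_S` is central iff `S` is an even set of null indices, or `S` is everything and `n` is odd. -/

open CliffordAlgebra Finset Submodule

theorem _root_.Finset.symmDiff_singleton_of_notMem {α : Type*} [DecidableEq α] {s : Finset α}
    {a : α} (ha : a ∉ s) : symmDiff s {a} = insert a s := by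
  ext b; by_cases hb : b = a <;> simp [mem_symmDiff, hb, ha]

theorem _root_.Finset.symmDiff_singleton_of_mem {α : Type*} [DecidableEq α] {s : Finset α}
    {a : α} (ha : a ∈ s) : symmDiff s {a} = s.erase a := by
  ext b; by_cases hb : b = a <;> simp [mem_symmDiff, hb, ha]

theorem _root_.List.prod_map_mul_eq_smul_mul_prod_map {R A ι : Type*} [CommSemiring R]
    [Semiring A] [Algebra R A] {x : A} {f : ι → A} {c : ι → R} {l : List ι}
    (h : ∀ i ∈ l, f i * x = c i • (x * f i)) :
    (l.map f).prod * x = (l.map c).prod • (x * (l.map f).prod) := by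
  induction l with
  | nil => simp
  | cons i l ih =>
    simp only [List.map_cons, List.prod_cons, List.forall_mem_cons] at h ⊢
    rw [mul_assoc, ih h.2, mul_smul_comm, ← mul_assoc, h.1, smul_mul_assoc, smul_smul,
      mul_comm, mul_assoc]

theorem _root_.List.Perm.prod_map_eq_neg_one_pow_smul (R : Type*) {A ι : Type*} [CommRing R]
    [Ring A] [Algebra R A] {f : ι → A} (hf : ∀ i j, i ≠ j → f i * f j = -(f j * f i))
    {l l' : List ι} (hp : l.Perm l') (hl : l.Nodup) :
    ∃ k : ℕ, (l.map f).prod = ((-1 : R) ^ k) • (l'.map f).prod := by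
  induction hp with
  | nil => exact ⟨0, by simp⟩
  | cons x _ ih =>
    obtain ⟨k, hk⟩ := ih (List.nodup_cons.mp hl).2
    exact ⟨k, by simp [hk]⟩
  | swap x y l =>
    have hyx : y ≠ x := fun h => by simp [h] at hl
    exact ⟨1, by simp [← mul_assoc, hf y x hyx]⟩
  | trans h₁₂ _ ih₁ ih₂ =>
    obtain ⟨k, hk⟩ := ih₁ hl
    obtain ⟨m, hm⟩ := ih₂ (h₁₂.nodup_iff.mp hl)
    exact ⟨k + m, by rw [hk, hm, smul_smul, pow_add]⟩

theorem _root_.Module.Basis.map_eq_zero_iff_of_map_mem_span_singleton {ι K V W : Type*}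
    [Fintype ι] [Field K] [AddCommGroup V] [Module K V] [AddCommGroup W] [Module K W]
    (b : Module.Basis ι K V) {v : ι → W} (hv : LinearIndependent K v) {f : V →ₗ[K] W}
    (hf : ∀ i, f (b i) ∈ K ∙ v i) (x : V) :
    f x = 0 ↔ ∀ i, b.repr x i ≠ 0 → f (b i) = 0 := by
  choose c hc using fun i => mem_span_singleton.mp (hf i)
  have hfx : f x = ∑ i, b.repr x i • f (b i) := by
    simp_rw [← map_smul, ← map_sum, b.sum_repr]
  constructor
  · intro h0 i hi
    have hsum : ∑ i, (b.repr x i * c i) • v i = 0 := by simp_rw [mul_smul, hc, ← hfx, h0]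
    have := Fintype.linearIndependent_iff.mp hv _ hsum i
    rw [← hc, (mul_eq_zero.mp this).resolve_left hi, zero_smul]
  · intro h
    rw [hfx]
    exact sum_eq_zero fun i _ => by by_cases hi : b.repr x i = 0 <;> simp [hi, h]

theorem _root_.Finset.forall_even_card_erase_or_iff {α : Type*} [Fintype α] [DecidableEq α]
    {S : Finset α} {P : α → Prop} :
    (∀ a, Even (S.erase a).card ∨ (a ∈ S ∧ P a)) ↔
      ((∀ a ∈ S, P a) ∧ Even S.card) ∨ (S = univ ∧ Odd S.card) := by
  have herase {a : α} (ha : a ∈ S) : Even (S.erase a).card ↔ ¬Even S.card := by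
    rw [card_erase_of_mem ha, Nat.even_sub (card_pos.mpr ⟨a, ha⟩)]
    simp
  by_cases he : Even S.card
  · simp only [he, and_true, ← Nat.not_even_iff_odd, not_true, and_false, or_false]
    refine ⟨fun h a ha => ((h a).resolve_left ((herase ha).not.mpr (not_not.mpr he))).2,
      fun h a => ?_⟩
    by_cases ha : a ∈ S
    · exact Or.inr ⟨ha, h a ha⟩
    · exact Or.inl (by rwa [erase_eq_of_notMem ha])
  · simp only [he, and_false, false_or, Nat.not_even_iff_odd.mp he, and_true, eq_univ_iff_forall]
    refine ⟨fun h a => ?_, fun h a => Or.inl ((herase (h a)).mpr he)⟩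
    by_contra ha
    have := h a
    rw [erase_eq_of_notMem ha] at this
    tauto

theorem _root_.IsUnit.forall_mul_mul_inverse_eq_iff {M₀ : Type*} [MonoidWithZero M₀] {T : M₀}
    (hT : IsUnit T) : (∀ U, T * U * Ring.inverse T = U) ↔ T ∈ Set.center M₀ := by
  obtain ⟨u, rfl⟩ := hT
  simp only [Ring.inverse_unit, Semigroup.mem_center_iff]
  exact forall_congr' fun U => by rw [Units.mul_inv_eq_iff_eq_mul, eq_comm]

def mon (S : Finset (Fin (p + q + r))) : G 𝔽 p q r :=
  ((S.sort (· ≤ ·)).map (e 𝔽 p q r)).prod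

def nullIndices : Set (Finset (Fin (p + q + r))) := {S | ∀ a ∈ S, p + q ≤ (a : ℕ)}

def centralIndices : Set (Finset (Fin (p + q + r))) :=
  nullIndices p q r ∩ {S | Even S.card} ∪ {S | S = univ ∧ Odd S.card}

section Monomials

variable {𝔽 p q r}

theorem w_eq_zero_iff {a : Fin (p + q + r)} : w 𝔽 p q r a = 0 ↔ p + q ≤ (a : ℕ) := by
  unfold w; split_ifs <;> simp <;> omega

theorem e_mul_self (a : Fin (p + q + r)) :
    e 𝔽 p q r a * e 𝔽 p q r a = algebraMap 𝔽 _ (w 𝔽 p q r a) := by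
  rw [e, ι_sq_scalar]
  congr 1
  simp [Q, QuadraticMap.weightedSumSquares_apply, Pi.single_apply]

theorem e_mul_e_of_ne {a b : Fin (p + q + r)} (h : a ≠ b) :
    e 𝔽 p q r a * e 𝔽 p q r b = -(e 𝔽 p q r b * e 𝔽 p q r a) := by
  refine ι_mul_ι_comm_of_isOrtho ?_
  simp only [QuadraticMap.IsOrtho, Q, QuadraticMap.weightedSumSquares_apply, Pi.add_apply,
    Pi.single_apply, smul_eq_mul, ← sum_add_distrib]
  refine sum_congr rfl fun x _ => ?_
  by_cases hxa : x = a <;> by_cases hxb : x = b <;> simp_all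

@[simp] theorem mon_empty : mon 𝔽 p q r ∅ = 1 := by simp [mon]

theorem prod_map_e_eq_smul_mon {l : List (Fin (p + q + r))} (hl : l.Nodup) :
    ∃ k : ℕ, (l.map (e 𝔽 p q r)).prod = ((-1 : 𝔽) ^ k) • mon 𝔽 p q r l.toFinset :=
  (List.perm_of_nodup_nodup_toFinset_eq hl (sort_nodup _ _) (sort_toFinset _ _).symm
    ).prod_map_eq_neg_one_pow_smul 𝔽 (fun _ _ => e_mul_e_of_ne) hl

theorem e_mul_mon_of_notMem {a : Fin (p + q + r)} {S : Finset (Fin (p + q + r))} (ha : a ∉ S) :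
    ∃ k : ℕ, e 𝔽 p q r a * mon 𝔽 p q r S =
      ((-1 : 𝔽) ^ k) • mon 𝔽 p q r (insert a S) := by
  have hl : (a :: S.sort (· ≤ ·)).Nodup :=
    List.nodup_cons.mpr ⟨by simpa using ha, sort_nodup _ _⟩
  simpa [mon] using prod_map_e_eq_smul_mon (𝔽 := 𝔽) hl

theorem e_mul_mon_of_mem {a : Fin (p + q + r)} {S : Finset (Fin (p + q + r))} (ha : a ∈ S) :
    ∃ k : ℕ, e 𝔽 p q r a * mon 𝔽 p q r S =
      ((-1 : 𝔽) ^ k * w 𝔽 p q r a) • mon 𝔽 p q r (S.erase a) := by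
  obtain ⟨k, hk⟩ := e_mul_mon_of_notMem (𝔽 := 𝔽) (notMem_erase a S)
  rw [insert_erase ha] at hk
  have hS :
      mon 𝔽 p q r S = ((-1 : 𝔽) ^ k) • (e 𝔽 p q r a * mon 𝔽 p q r (S.erase a)) := by
    rw [hk, smul_smul, ← pow_add, ← two_mul, pow_mul]
    simp
  refine ⟨k, ?_⟩
  rw [hS, mul_smul_comm, ← mul_assoc, e_mul_self, ← Algebra.smul_def, smul_smul]

theorem e_mul_mon_mem_span (a : Fin (p + q + r)) (S : Finset (Fin (p + q + r))) :
    e 𝔽 p q r a * mon 𝔽 p q r S ∈ 𝔽 ∙ mon 𝔽 p q r (symmDiff S {a}) := by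
  by_cases ha : a ∈ S
  · obtain ⟨k, hk⟩ := e_mul_mon_of_mem (𝔽 := 𝔽) ha
    rw [hk, symmDiff_singleton_of_mem ha]
    exact smul_mem _ _ (mem_span_singleton_self _)
  · obtain ⟨k, hk⟩ := e_mul_mon_of_notMem (𝔽 := 𝔽) ha
    rw [hk, symmDiff_singleton_of_notMem ha]
    exact smul_mem _ _ (mem_span_singleton_self _)

theorem e_mul_mem_span_mon_image {𝒮 : Set (Finset (Fin (p + q + r)))} {a : Fin (p + q + r)}
    (h𝒮 : ∀ S ∈ 𝒮, symmDiff S {a} ∈ 𝒮) {x : G 𝔽 p q r}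
    (hx : x ∈ span 𝔽 (mon 𝔽 p q r '' 𝒮)) :
    e 𝔽 p q r a * x ∈ span 𝔽 (mon 𝔽 p q r '' 𝒮) := by
  have hle : span 𝔽 (mon 𝔽 p q r '' 𝒮) ≤
      (span 𝔽 (mon 𝔽 p q r '' 𝒮)).comap (LinearMap.mulLeft 𝔽 (e 𝔽 p q r a)) := by
    rw [span_le]
    rintro _ ⟨S, hS, rfl⟩
    exact (span_singleton_le_iff_mem _ _).mpr (subset_span (Set.mem_image_of_mem _ (h𝒮 S hS)))
      (e_mul_mon_mem_span a S)
  exact hle hx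

theorem top_le_span_mon : ⊤ ≤ span 𝔽 (Set.range (mon 𝔽 p q r)) := by
  rintro x -
  rw [← Set.image_univ]
  induction x using CliffordAlgebra.left_induction with
  | algebraMap c =>
    rw [Algebra.algebraMap_eq_smul_one, ← mon_empty]
    exact smul_mem _ _ (subset_span ⟨∅, trivial, rfl⟩)
  | add x y hx hy => exact add_mem hx hy
  | ι_mul x v hx =>
    rw [← (Pi.basisFun 𝔽 _).sum_repr v, map_sum, sum_mul]
    refine sum_mem fun a _ => ?_
    rw [map_smul, Pi.basisFun_apply, smul_mul_assoc, ← e]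
    exact smul_mem _ _ (e_mul_mem_span_mon_image (fun _ _ => Set.mem_univ _) hx)

theorem finrank_eq_card :
    Module.finrank 𝔽 (G 𝔽 p q r) = Fintype.card (Finset (Fin (p + q + r))) := by
  rw [(equivExterior (Q 𝔽 p q r)).finrank_eq,
    Module.finrank_eq_card_basis (Pi.basisFun 𝔽 (Fin (p + q + r))).ExteriorAlgebra]

variable (𝔽 p q r) in
def monBasis : Module.Basis (Finset (Fin (p + q + r))) 𝔽 (G 𝔽 p q r) :=
  .mk (linearIndependent_of_top_le_span_of_card_eq_finrank top_le_span_mon finrank_eq_card.symm)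
    top_le_span_mon

@[simp] theorem coe_monBasis : ⇑(monBasis 𝔽 p q r) = mon 𝔽 p q r := Module.Basis.coe_mk _ _

theorem mon_ne_zero (S : Finset (Fin (p + q + r))) : mon 𝔽 p q r S ≠ 0 := by
  simpa using (monBasis 𝔽 p q r).ne_zero S

theorem mem_span_mon_image_iff {𝒮 : Set (Finset (Fin (p + q + r)))} {x : G 𝔽 p q r} :
    x ∈ span 𝔽 (mon 𝔽 p q r '' 𝒮) ↔
      ∀ S, (monBasis 𝔽 p q r).repr x S ≠ 0 → S ∈ 𝒮 := by
  rw [← coe_monBasis, Module.Basis.mem_span_image]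
  simp [Set.subset_def]

theorem mon_mul_e (a : Fin (p + q + r)) (S : Finset (Fin (p + q + r))) :
    mon 𝔽 p q r S * e 𝔽 p q r a =
      ((-1 : 𝔽) ^ (S.erase a).card) • (e 𝔽 p q r a * mon 𝔽 p q r S) := by
  have hcomm : ∀ b ∈ S.sort (· ≤ ·), e 𝔽 p q r b * e 𝔽 p q r a =
      (if b = a then (1 : 𝔽) else -1) • (e 𝔽 p q r a * e 𝔽 p q r b) := by
    intro b _
    split_ifs with hb
    · rw [hb, one_smul]
    · rw [e_mul_e_of_ne hb, neg_one_smul]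
  rw [mon, List.prod_map_mul_eq_smul_mul_prod_map hcomm, ((sort_perm_toList S _).map _).prod_eq,
    prod_map_toList, prod_ite, prod_const_one, prod_const, one_mul, filter_ne']

theorem e_mul_mon_eq_zero_iff {a : Fin (p + q + r)} {S : Finset (Fin (p + q + r))} :
    e 𝔽 p q r a * mon 𝔽 p q r S = 0 ↔ a ∈ S ∧ w 𝔽 p q r a = 0 := by
  by_cases ha : a ∈ S
  · obtain ⟨k, hk⟩ := e_mul_mon_of_mem (𝔽 := 𝔽) ha
    simp [hk, ha, mon_ne_zero]
  · obtain ⟨k, hk⟩ := e_mul_mon_of_notMem (𝔽 := 𝔽) ha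
    simp [hk, ha, mon_ne_zero]

theorem commute_e_mon_iff {a : Fin (p + q + r)} {S : Finset (Fin (p + q + r))} :
    Commute (e 𝔽 p q r a) (mon 𝔽 p q r S) ↔
      Even (S.erase a).card ∨ (a ∈ S ∧ p + q ≤ (a : ℕ)) := by
  rw [commute_iff_eq, mon_mul_e, ← sub_eq_zero, ← one_smul 𝔽 (e 𝔽 p q r a * _), smul_smul,
    mul_one, ← sub_smul, smul_eq_zero, e_mul_mon_eq_zero_iff, sub_eq_zero, eq_comm,
    neg_one_pow_eq_one_iff_even (by norm_num), w_eq_zero_iff]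

theorem forall_commute_e_mon_iff {S : Finset (Fin (p + q + r))} :
    (∀ a, Commute (e 𝔽 p q r a) (mon 𝔽 p q r S)) ↔ S ∈ centralIndices p q r := by
  simp only [commute_e_mon_iff, forall_even_card_erase_or_iff]
  rfl

theorem commute_e_iff_forall_commute_mon {a : Fin (p + q + r)} {z : G 𝔽 p q r} :
    Commute (e 𝔽 p q r a) z ↔
      ∀ S, (monBasis 𝔽 p q r).repr z S ≠ 0 →
        Commute (e 𝔽 p q r a) (mon 𝔽 p q r S) := by
  have hv : LinearIndependent 𝔽 (mon 𝔽 p q r ∘ fun S => symmDiff S {a}) := by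
    rw [← coe_monBasis]
    exact (monBasis 𝔽 p q r).linearIndependent.comp _ (symmDiff_left_injective {a})
  have hf (S : Finset (Fin (p + q + r))) :
      (LinearMap.mulLeft 𝔽 (e 𝔽 p q r a) - LinearMap.mulRight 𝔽 (e 𝔽 p q r a))
        (monBasis 𝔽 p q r S) ∈ 𝔽 ∙ mon 𝔽 p q r (symmDiff S {a}) := by
    have h := e_mul_mon_mem_span (𝔽 := 𝔽) a S
    simp only [LinearMap.sub_apply, LinearMap.mulLeft_apply, LinearMap.mulRight_apply,
      coe_monBasis, mon_mul_e]
    exact sub_mem h (smul_mem _ _ h)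
  simpa [commute_iff_eq, sub_eq_zero] using
    (monBasis 𝔽 p q r).map_eq_zero_iff_of_map_mem_span_singleton hv hf z

theorem mem_center_iff_forall_commute_e {z : G 𝔽 p q r} :
    z ∈ Subalgebra.center 𝔽 (G 𝔽 p q r) ↔ ∀ a, Commute (e 𝔽 p q r a) z := by
  rw [Subalgebra.mem_center_iff]
  refine ⟨fun h a => h _, fun h x => ?_⟩
  have hι (v : Fin (p + q + r) → 𝔽) : Commute z (ι (Q 𝔽 p q r) v) := by
    rw [← (Pi.basisFun 𝔽 _).sum_repr v, map_sum]
    exact Commute.sum_right _ _ _ fun a _ => by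
      rw [map_smul, Pi.basisFun_apply, ← e]
      exact ((h a).symm).smul_right _
  have hx : x ∈ Algebra.adjoin 𝔽 (Set.range (ι (Q 𝔽 p q r))) := by
    rw [adjoin_range_ι]; trivial
  exact (Algebra.commute_of_mem_adjoin_of_forall_mem_commute hx
    (by rintro _ ⟨v, rfl⟩; exact hι v)).eq.symm

theorem toSubmodule_center_eq_span_mon :
    Subalgebra.toSubmodule (Subalgebra.center 𝔽 (G 𝔽 p q r)) =
      span 𝔽 (mon 𝔽 p q r '' centralIndices p q r) := by
  ext z
  rw [Subalgebra.mem_toSubmodule, mem_center_iff_forall_commute_e, mem_span_mon_image_iff]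
  exact ⟨fun h S hS => forall_commute_e_mon_iff.mp fun a =>
      commute_e_iff_forall_commute_mon.mp (h a) S hS,
    fun h a => commute_e_iff_forall_commute_mon.mpr fun S hS =>
      forall_commute_e_mon_iff.mpr (h S hS) a⟩

theorem involute_mon (S : Finset (Fin (p + q + r))) :
    involute (mon 𝔽 p q r S) = ((-1 : 𝔽) ^ S.card) • mon 𝔽 p q r S := by
  have h : involute ∘ e 𝔽 p q r = Neg.neg ∘ e 𝔽 p q r := funext fun a => involute_ι _
  rw [mon, map_list_prod, List.map_map, h, ← List.map_map, List.prod_map_neg, List.length_map,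
    length_sort, Algebra.smul_def, map_pow, map_neg, map_one]

theorem mem_Geven_iff {x : G 𝔽 p q r} :
    x ∈ Geven 𝔽 p q r ↔ ∀ S, (monBasis 𝔽 p q r).repr x S ≠ 0 → Even S.card := by
  have hf (S : Finset (Fin (p + q + r))) :
      (involute.toLinearMap - LinearMap.id : G 𝔽 p q r →ₗ[𝔽] G 𝔽 p q r)
        (monBasis 𝔽 p q r S) ∈ 𝔽 ∙ mon 𝔽 p q r S := by
    simp only [LinearMap.sub_apply, AlgHom.toLinearMap_apply, LinearMap.id_apply, coe_monBasis,
      involute_mon]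
    exact sub_mem (smul_mem _ _ (mem_span_singleton_self _)) (mem_span_singleton_self _)
  have hv : LinearIndependent 𝔽 (mon 𝔽 p q r) :=
    coe_monBasis (𝔽 := 𝔽) ▸ (monBasis 𝔽 p q r).linearIndependent
  have key := (monBasis 𝔽 p q r).map_eq_zero_iff_of_map_mem_span_singleton hv hf x
  simp only [LinearMap.sub_apply, AlgHom.toLinearMap_apply, LinearMap.id_apply, coe_monBasis,
    involute_mon, sub_eq_zero] at key
  refine key.trans (forall₂_congr fun S _ => ?_)
  nth_rewrite 2 [← one_smul 𝔽 (mon 𝔽 p q r S)]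
  rw [(smul_left_injective 𝔽 (mon_ne_zero S)).eq_iff, neg_one_pow_eq_one_iff_even (by norm_num)]

theorem Λrs_eq_span_mon : Λrs 𝔽 p q r = span 𝔽 (mon 𝔽 p q r '' nullIndices p q r) := by
  apply le_antisymm
  · rw [Λrs, Λr, Algebra.adjoin_eq_span, span_le]
    intro x hx
    induction hx using Submonoid.closure_induction_left with
    | one => exact subset_span ⟨∅, by simp [nullIndices], mon_empty⟩
    | mul_left _ ha _ _ hy =>
      obtain ⟨a, hnull, rfl⟩ := ha
      refine e_mul_mem_span_mon_image (fun S hS b hb => ?_) hy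
      rcases mem_symmDiff.mp hb with ⟨hbS, -⟩ | ⟨hba, -⟩
      · exact hS b hbS
      · rwa [mem_singleton.mp hba]
  · rw [span_le]
    rintro _ ⟨S, hS, rfl⟩
    refine Subalgebra.list_prod_mem _ fun x hx => ?_
    obtain ⟨a, ha, rfl⟩ := List.mem_map.mp hx
    exact Algebra.subset_adjoin ⟨a, hS a ((mem_sort _).mp ha), rfl⟩

theorem Λr0_eq_span_mon :
    Λr0 𝔽 p q r = span 𝔽 (mon 𝔽 p q r '' (nullIndices p q r ∩ {S | Even S.card})) := by
  ext x
  rw [Λr0, Submodule.mem_inf, Λrs_eq_span_mon, mem_span_mon_image_iff, mem_Geven_iff,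
    mem_span_mon_image_iff]
  exact ⟨fun h S hS => ⟨h.1 S hS, h.2 S hS⟩,
    fun h => ⟨fun S hS => (h S hS).1, fun S hS => (h S hS).2⟩⟩

theorem Gn_eq_span_mon : Gn 𝔽 p q r = span 𝔽 (mon 𝔽 p q r '' {univ}) := by
  rw [Gn, eTop, Set.image_singleton, mon, Fin.sort_univ, List.ofFn_eq_map]

end Monomials

theorem adjoint_kernel_eq :
    {T : G 𝔽 p q r | IsUnit T ∧ ∀ U : G 𝔽 p q r, T * U * Ring.inverse T = U} =
      ux 𝔽 p q r ↑(span 𝔽 (mon 𝔽 p q r '' centralIndices p q r)) := by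
  ext T
  rw [← toSubmodule_center_eq_span_mon]
  simp only [ux, Set.mem_ofPred_eq, SetLike.mem_coe, Subalgebra.mem_toSubmodule,
    and_comm (b := IsUnit T)]
  exact and_congr_right fun hT => hT.forall_mul_mul_inverse_eq_iff.trans
    (Semigroup.mem_center_iff.trans Subalgebra.mem_center_iff.symm)

theorem stmt4 :
    (Odd (p + q + r) →
      {T : G 𝔽 p q r | IsUnit T ∧ ∀ U : G 𝔽 p q r, T * U * Ring.inverse T = U}
        = ux 𝔽 p q r ↑(Λr0 𝔽 p q r ⊔ Gn 𝔽 p q r)) ∧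
    (Even (p + q + r) →
      {T : G 𝔽 p q r | IsUnit T ∧ ∀ U : G 𝔽 p q r, T * U * Ring.inverse T = U}
        = ux 𝔽 p q r ↑(Λr0 𝔽 p q r)) := by
  refine ⟨fun hodd => ?_, fun heven => ?_⟩ <;> rw [adjoint_kernel_eq, centralIndices]
  · have hunivOdd : {S : Finset (Fin (p + q + r)) | S = univ ∧ Odd S.card} = {univ} := by
      ext S
      simp +contextual [hodd]
    rw [hunivOdd, Set.image_union, span_union, ← Λr0_eq_span_mon, ← Gn_eq_span_mon]
  · have hunivOdd : {S : Finset (Fin (p + q + r)) | S = univ ∧ Odd S.card} = ∅ := by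
      ext S
      simp +contextual [← Nat.not_even_iff_odd, heven]
    rw [hunivOdd, Set.union_empty, ← Λr0_eq_span_mon]

end ClGA
end
end

section
/- The group P^{±rad}_{p,q,r} := (𝒢^{(0)×} ∪ 𝒢^{(1)×}) (𝒢^0 + rad 𝒢)^× is equal to the set {T ∈ 𝒢^× : (T^{-1})^̂ T ∈ (𝒢^0 + rad 𝒢)^×}, where (T^{-1})^̂ denotes the grade involution applied to T^{-1}. -/
open Pointwise

noncomputable section

/-!
Write `S = 𝔽·1 + rad 𝒢` and `s = σ(T⁻¹) T` for the grade involution `σ`. Since `rad 𝒢` is a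
`σ`-stable two-sided nil ideal, `S` is closed under products, `σ` and inverses of its units; so for
`T = E u` with `E` homogeneous and `u ∈ S^×`, `s = ±σ(u⁻¹) u` lies in `S^×`. Conversely
`s σ(s) = 1`, hence `u = 1 ± s` satisfies `u σ(s) = ±σ(u)`, which says that `T u⁻¹` is even or
odd; choosing the sign so that the scalar part of `u` is nonzero makes `u` invertible.

`rad 𝒢` is nil because the algebra map `𝒢 → 𝒢[X]` multiplying the null generators by `X` is
injective and sends `rad 𝒢` into `X·𝒢[X]`, while its image has bounded degree since `𝒢` is
finite-dimensional.
-/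

open Polynomial

theorem Module.Finite.exists_natDegree_le {R M A : Type*} [CommSemiring R] [AddCommMonoid M]
    [Module R M] [Module.Finite R M] [Semiring A] [Module R A] (f : M →ₗ[R] A[X]) :
    ∃ D, ∀ x, (f x).natDegree ≤ D := by
  obtain ⟨s, hs⟩ := Module.Finite.fg_top (R := R) (M := M)
  refine ⟨s.sup fun x => (f x).natDegree, fun x => ?_⟩
  induction (hs ▸ Submodule.mem_top : x ∈ Submodule.span R ↑s) using Submodule.span_induction with
  | mem x hx => exact Finset.le_sup (f := fun x => (f x).natDegree) hx
  | zero => simp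
  | add x y _ _ hx hy => rw [map_add]; exact natDegree_add_le_of_degree_le hx hy
  | smul c x _ hx => rw [map_smul]; exact (natDegree_smul_le c _).trans hx

theorem isNilpotent_of_coeff_zero_eq_zero {R A : Type*} [CommSemiring R] [Semiring A] [Algebra R A]
    [Module.Finite R A] {φ : A →ₐ[R] A[X]} (hφ : Function.Injective φ) {x : A}
    (hx : (φ x).coeff 0 = 0) : IsNilpotent x := by
  obtain ⟨D, hD⟩ := Module.Finite.exists_natDegree_le φ.toLinearMap
  obtain ⟨g, hg⟩ := X_dvd_iff.2 hx
  have hpow : φ (x ^ (D + 1)) = X ^ (D + 1) * g ^ (D + 1) := by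
    rw [map_pow, hg, (commute_X g).mul_pow]
  refine ⟨D + 1, hφ ?_⟩
  rw [hpow, map_zero]
  suffices g ^ (D + 1) = 0 by rw [this, mul_zero]
  ext d
  rw [coeff_zero, ← coeff_X_pow_mul, ← hpow]
  exact coeff_eq_zero_of_natDegree_lt ((hD _).trans_lt (by omega))

instance CliffordAlgebra.finiteDimensional {K M : Type*} [Field K] [Invertible (2 : K)]
    [AddCommGroup M] [Module K M] [FiniteDimensional K M] (Q : QuadraticForm K M) :
    FiniteDimensional K (CliffordAlgebra Q) :=
  have := Module.Finite.of_basis (Module.finBasis K M).ExteriorAlgebra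
  Module.Finite.equiv (CliffordAlgebra.equivExterior Q).symm

namespace CliffordAlgebra

variable {R M : Type*} [CommRing R] [AddCommGroup M] [Module R M] {Q : QuadraticForm R M}
  (ν : M →ₗ[R] M) (hν : ∀ v w, Q (w + ν v) = Q w)

noncomputable def nullScaling : CliffordAlgebra Q →ₐ[R] (CliffordAlgebra Q)[X] :=
  lift Q ⟨(monomial 0).restrictScalars R ∘ₗ ι Q ∘ₗ (LinearMap.id - ν)
      + (monomial 1).restrictScalars R ∘ₗ ι Q ∘ₗ ν, fun v => by
    have hQ : Q (v - ν v) = Q v := by simpa using (hν v (v - ν v)).symm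
    have hQν : Q (ν v) = 0 := by simpa using hν v 0
    have hpolar : ι Q (ν v) * ι Q (v - ν v) + ι Q (v - ν v) * ι Q (ν v) = 0 := by
      rw [ι_mul_ι_add_swap, QuadraticMap.polar, add_sub_cancel, hQ, hQν]
      simp
    simp only [LinearMap.add_apply, LinearMap.comp_apply, LinearMap.restrictScalars_apply,
      LinearMap.sub_apply, LinearMap.id_apply, add_mul, mul_add, monomial_mul_monomial,
      ι_sq_scalar, hQ, hQν, map_zero, add_zero]
    rw [add_assoc, ← map_add, hpolar, map_zero, add_zero, monomial_zero_left,
      Polynomial.algebraMap_apply]⟩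

theorem nullScaling_ι (v : M) :
    nullScaling ν hν (ι Q v) = monomial 0 (ι Q (v - ν v)) + monomial 1 (ι Q (ν v)) :=
  lift_ι_apply _ _ _

theorem nullScaling_ι_of_map_eq {v : M} (hv : ν v = v) :
    nullScaling ν hν (ι Q v) = monomial 1 (ι Q v) := by
  rw [nullScaling_ι, hv, sub_self, map_zero, map_zero, zero_add]

theorem nullScaling_injective : Function.Injective (nullScaling ν hν) := by
  let ev := eval₂AlgHom (AlgHom.id R (CliffordAlgebra Q)) 1 fun _ => Commute.one_right _
  have hev : ev.comp (nullScaling ν hν) = AlgHom.id R _ :=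
    hom_ext <| LinearMap.ext fun v => by simp [ev, nullScaling_ι]
  exact Function.LeftInverse.injective (g := ev) (DFunLike.congr_fun hev)

end CliffordAlgebra

section Twist

variable {R A : Type*} [CommSemiring R] [Ring A] [Algebra R A] (σ : A →ₐ[R] A)

theorem map_ringInverse_of_isUnit {M₀ N₀ F : Type*} [MonoidWithZero M₀] [MonoidWithZero N₀]
    [FunLike F M₀ N₀] [MonoidHomClass F M₀ N₀] (f : F) {a : M₀} (ha : IsUnit a) :
    f (Ring.inverse a) = Ring.inverse (f a) := by
  obtain ⟨a, rfl⟩ := ha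
  rw [Ring.inverse_unit]
  exact (Ring.inverse_unit (Units.map (f : M₀ →* N₀) a)).symm

noncomputable def twist (T : A) : A := σ (Ring.inverse T) * T

theorem isUnit_twist {T : A} (hT : IsUnit T) : IsUnit (twist σ T) :=
  (hT.ringInverse.map σ).mul hT

theorem twist_mul {a : A} (ha : IsUnit a) (b : A) :
    twist σ (a * b) = σ (Ring.inverse b) * twist σ a * b := by
  simp only [twist, Ring.inverse_mul (Or.inl ha), map_mul, mul_assoc]

theorem twist_eq_smul_one {E : A} (hE : IsUnit E) {ε : R} (hε : ε * ε = 1) (hσE : σ E = ε • E) :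
    twist σ E = ε • 1 := by
  have h : ε • twist σ E = 1 := by
    rw [twist, ← mul_smul_comm, ← hσE, ← map_mul, Ring.inverse_mul_cancel _ hE, map_one]
  rw [← h, smul_smul, hε, one_smul]

theorem map_twist (hσ : ∀ x, σ (σ x) = x) (T : A) : σ (twist σ T) = Ring.inverse T * σ T := by
  rw [twist, map_mul, hσ]

theorem twist_mul_of_map_eq_smul {E : A} (hE : IsUnit E) {ε : R} (hε : ε * ε = 1)
    (hσE : σ E = ε • E) (u : A) : twist σ (E * u) = ε • twist σ u := by
  rw [twist_mul σ hE, twist_eq_smul_one σ hE hε hσE, mul_smul_one, smul_mul_assoc, twist]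

theorem map_mul_ringInverse_one_add_smul_twist (hσ : ∀ x, σ (σ x) = x) {T : A} (hT : IsUnit T)
    {ε : R} (hε : ε * ε = 1) (hu : IsUnit (1 + ε • twist σ T)) :
    σ (T * Ring.inverse (1 + ε • twist σ T)) = ε • (T * Ring.inverse (1 + ε • twist σ T)) := by
  set s := twist σ T with hs_def
  set u := 1 + ε • s
  have hss : s * σ s = 1 := by
    rw [map_twist σ hσ, hs_def, twist, mul_assoc, Ring.mul_inverse_cancel_left _ _ hT, ← map_mul,
      Ring.inverse_mul_cancel _ hT, map_one]
  have hTs : T * σ s = σ T := by rw [map_twist σ hσ, Ring.mul_inverse_cancel_left _ _ hT]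
  have key : u * σ s = ε • σ u := by
    simp only [u, add_mul, one_mul, smul_mul_assoc, hss, map_add, map_one, map_smul, smul_add,
      smul_smul, hε, one_smul, add_comm]
  calc σ (T * Ring.inverse u) = σ T * Ring.inverse (σ u) := by
        rw [map_mul, map_ringInverse_of_isUnit σ hu]
    _ = T * Ring.inverse u * (u * σ s) * Ring.inverse (σ u) := by
        rw [mul_assoc T, Ring.inverse_mul_cancel_left _ _ hu, hTs]
    _ = ε • (T * Ring.inverse u) := by
        rw [key, mul_smul_comm, smul_mul_assoc, Ring.mul_inverse_cancel_right _ _ (hu.map σ)]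

end Twist

section ScalarAddIdeal

variable {𝔽 A : Type*} [Field 𝔽] [Ring A] [Algebra 𝔽 A] {I : Submodule 𝔽 A}

theorem mem_span_one_sup_iff {x : A} :
    x ∈ Submodule.span 𝔽 {1} ⊔ I ↔ ∃ c : 𝔽, ∃ y ∈ I, x = c • 1 + y := by
  simp only [Submodule.mem_sup, Submodule.mem_span_singleton]
  constructor
  · rintro ⟨_, ⟨c, rfl⟩, y, hy, rfl⟩
    exact ⟨c, y, hy, rfl⟩
  · rintro ⟨c, y, hy, rfl⟩
    exact ⟨_, ⟨c, rfl⟩, y, hy, rfl⟩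

theorem isUnit_smul_one_add (hI : ∀ y ∈ I, IsNilpotent y) {y : A} (hy : y ∈ I) {c : 𝔽}
    (hc : c ≠ 0) : IsUnit (c • 1 + y) := by
  rw [← Algebra.algebraMap_eq_smul_one]
  exact (hI y hy).isUnit_add_left_of_commute ((isUnit_iff_ne_zero.2 hc).map _)
    (Algebra.commute_algebraMap_left c y).symm

theorem mul_mem_span_one_sup (hI : ∀ y ∈ I, ∀ a, y * a ∈ I) {x y : A}
    (hx : x ∈ Submodule.span 𝔽 {1} ⊔ I) (hy : y ∈ Submodule.span 𝔽 {1} ⊔ I) :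
    x * y ∈ Submodule.span 𝔽 {1} ⊔ I := by
  obtain ⟨c, j, hj, rfl⟩ := mem_span_one_sup_iff.1 hx
  obtain ⟨d, k, hk, rfl⟩ := mem_span_one_sup_iff.1 hy
  refine mem_span_one_sup_iff.2
    ⟨c * d, c • k + j * (d • 1 + k), I.add_mem (I.smul_mem c hk) (hI j hj _), ?_⟩
  rw [add_mul, smul_mul_assoc, one_mul, smul_add, smul_smul, add_assoc]

theorem ringInverse_mem_span_one_sup [Nontrivial A] (hI : ∀ a, ∀ y ∈ I, a * y ∈ I)
    (hInil : ∀ y ∈ I, IsNilpotent y) {x : A} (hx : x ∈ Submodule.span 𝔽 {1} ⊔ I)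
    (hxu : IsUnit x) : Ring.inverse x ∈ Submodule.span 𝔽 {1} ⊔ I := by
  obtain ⟨c, y, hy, rfl⟩ := mem_span_one_sup_iff.1 hx
  have hc : c ≠ 0 := by
    rintro rfl
    rw [zero_smul, zero_add] at hxu
    exact (hInil y hy).not_isUnit hxu
  set z := Ring.inverse (c • 1 + y)
  have hz : c • z + z * y = 1 := by
    rw [← Ring.inverse_mul_cancel _ hxu, mul_add, mul_smul_comm, mul_one]
  refine mem_span_one_sup_iff.2 ⟨c⁻¹, -(c⁻¹ • (z * y)), I.neg_mem (I.smul_mem _ (hI z y hy)), ?_⟩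
  rw [← hz, smul_add, smul_smul, inv_mul_cancel₀ hc, one_smul, add_neg_cancel_right]

theorem map_mem_span_one_sup (σ : A →ₐ[𝔽] A) (hI : ∀ y ∈ I, σ y ∈ I) {x : A}
    (hx : x ∈ Submodule.span 𝔽 {1} ⊔ I) : σ x ∈ Submodule.span 𝔽 {1} ⊔ I := by
  obtain ⟨c, y, hy, rfl⟩ := mem_span_one_sup_iff.1 hx
  exact mem_span_one_sup_iff.2 ⟨c, σ y, hI y hy, by rw [map_add, map_smul, map_one]⟩

end ScalarAddIdeal

section HomogeneousUnits

variable {𝔽 A : Type*} [Field 𝔽] [Ring A] [Algebra 𝔽 A] {σ : A →ₐ[𝔽] A}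
  {I : Submodule 𝔽 A}

theorem homogeneous_units_mul_subset [Nontrivial A] (hIl : ∀ a, ∀ y ∈ I, a * y ∈ I)
    (hIr : ∀ y ∈ I, ∀ a, y * a ∈ I) (hIσ : ∀ y ∈ I, σ y ∈ I) (hInil : ∀ y ∈ I, IsNilpotent y) :
    ({E | σ E = E ∧ IsUnit E} ∪ {E | σ E = -E ∧ IsUnit E}) *
        {u | u ∈ Submodule.span 𝔽 {1} ⊔ I ∧ IsUnit u} ⊆
      {T | IsUnit T ∧ twist σ T ∈ Submodule.span 𝔽 {1} ⊔ I ∧ IsUnit (twist σ T)} := by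
  rintro _ ⟨E, hE, u, ⟨huS, hu⟩, rfl⟩
  obtain ⟨ε, hε, hσE, hEu⟩ : ∃ ε : 𝔽, ε * ε = 1 ∧ σ E = ε • E ∧ IsUnit E := by
    rcases hE with ⟨hσE, hEu⟩ | ⟨hσE, hEu⟩
    · exact ⟨1, one_mul 1, by rw [hσE, one_smul], hEu⟩
    · exact ⟨-1, by norm_num, by rw [hσE, neg_one_smul], hEu⟩
  have htwist : twist σ u ∈ Submodule.span 𝔽 {1} ⊔ I :=
    mul_mem_span_one_sup hIr
      (map_mem_span_one_sup σ hIσ (ringInverse_mem_span_one_sup hIl hInil huS hu)) huS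
  refine ⟨hEu.mul hu, ?_, isUnit_twist σ (hEu.mul hu)⟩
  rw [twist_mul_of_map_eq_smul σ hEu hε hσE]
  exact Submodule.smul_mem _ ε htwist

theorem subset_homogeneous_units_mul (h2 : (2 : 𝔽) ≠ 0) (hσ : ∀ x, σ (σ x) = x)
    (hInil : ∀ y ∈ I, IsNilpotent y) :
    {T | IsUnit T ∧ twist σ T ∈ Submodule.span 𝔽 {1} ⊔ I ∧ IsUnit (twist σ T)} ⊆
      ({E | σ E = E ∧ IsUnit E} ∪ {E | σ E = -E ∧ IsUnit E}) *
        {u | u ∈ Submodule.span 𝔽 {1} ⊔ I ∧ IsUnit u} := by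
  rintro T ⟨hT, hsS, -⟩
  obtain ⟨c, y, hy, hs⟩ := mem_span_one_sup_iff.1 hsS
  obtain ⟨ε, hε, hεc⟩ : ∃ ε : 𝔽, (ε = 1 ∨ ε = -1) ∧ 1 + ε * c ≠ 0 := by
    by_cases hc : c = -1
    · exact ⟨-1, Or.inr rfl, by rw [hc]; norm_num; exact h2⟩
    · exact ⟨1, Or.inl rfl, by rw [one_mul]; contrapose! hc; linear_combination hc⟩
  set u := 1 + ε • twist σ T with hu_def
  have hu : IsUnit u := by
    rw [show u = (1 + ε * c) • 1 + ε • y by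
      rw [hu_def, hs, smul_add, smul_smul, add_smul, one_smul, add_assoc]]
    exact isUnit_smul_one_add hInil (I.smul_mem ε hy) hεc
  have huS : u ∈ Submodule.span 𝔽 {1} ⊔ I :=
    Submodule.add_mem _ (mem_span_one_sup_iff.2 ⟨1, 0, I.zero_mem, by simp⟩)
      (Submodule.smul_mem _ ε hsS)
  have hσE := map_mul_ringInverse_one_add_smul_twist σ hσ hT
    (by rcases hε with rfl | rfl <;> norm_num) hu
  refine ⟨T * Ring.inverse u, ?_, u, ⟨huS, hu⟩, Ring.inverse_mul_cancel_right _ _ hu⟩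
  rcases hε with rfl | rfl
  · exact Or.inl ⟨hσE.trans (one_smul 𝔽 _), hT.mul hu.ringInverse⟩
  · exact Or.inr ⟨hσE.trans (neg_one_smul 𝔽 _), hT.mul hu.ringInverse⟩

end HomogeneousUnits

namespace ClGA

open CliffordAlgebra

variable (𝔽 : Type*) [RCLike 𝔽] (p q r : ℕ)

def nullProj : (Fin (p + q + r) → 𝔽) →ₗ[𝔽] (Fin (p + q + r) → 𝔽) where
  toFun v i := if p + q ≤ (i : ℕ) then v i else 0
  map_add' u v := by funext i; split_ifs <;> simp [*]
  map_smul' c v := by funext i; split_ifs <;> simp [*]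

theorem Q_add_nullProj (v x : Fin (p + q + r) → 𝔽) :
    Q 𝔽 p q r (x + nullProj 𝔽 p q r v) = Q 𝔽 p q r x := by
  simp only [Q, QuadraticMap.weightedSumSquares_apply]
  refine Finset.sum_congr rfl fun i _ => ?_
  by_cases hi : p + q ≤ (i : ℕ)
  · have : w 𝔽 p q r i = 0 := by simp [w, hi.not_gt, (le_trans le_self_add hi).not_gt]
    simp [this]
  · simp [nullProj, hi]

theorem nullProj_single {a : Fin (p + q + r)} (ha : p + q ≤ (a : ℕ)) :
    nullProj 𝔽 p q r (Pi.single a 1) = Pi.single a 1 := by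
  funext i
  by_cases hi : i = a
  · subst hi; simp [nullProj, ha]
  · simp [nullProj, hi]

theorem mul_mem_radG_left (g : G 𝔽 p q r) {x : G 𝔽 p q r} (hx : x ∈ radG 𝔽 p q r) :
    g * x ∈ radG 𝔽 p q r := by
  refine (Submodule.span_le.2 ?_ : radG 𝔽 p q r ≤ (radG 𝔽 p q r).comap (LinearMap.mulLeft 𝔽 g)) hx
  rintro _ ⟨u, v, a, ha, rfl⟩
  exact Submodule.subset_span ⟨g * u, v, a, ha, by simp only [LinearMap.mulLeft_apply, mul_assoc]⟩

theorem mul_mem_radG_right {x : G 𝔽 p q r} (hx : x ∈ radG 𝔽 p q r) (g : G 𝔽 p q r) :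
    x * g ∈ radG 𝔽 p q r := by
  refine (Submodule.span_le.2 ?_ : radG 𝔽 p q r ≤ (radG 𝔽 p q r).comap (LinearMap.mulRight 𝔽 g)) hx
  rintro _ ⟨u, v, a, ha, rfl⟩
  exact Submodule.subset_span ⟨u, v * g, a, ha, by simp only [LinearMap.mulRight_apply, mul_assoc]⟩

theorem involute_mem_radG {x : G 𝔽 p q r} (hx : x ∈ radG 𝔽 p q r) :
    involute x ∈ radG 𝔽 p q r := by
  refine (Submodule.span_le.2 ?_ : radG 𝔽 p q r ≤ (radG 𝔽 p q r).comap involute.toLinearMap) hx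
  rintro _ ⟨u, v, a, ha, rfl⟩
  refine Submodule.subset_span ⟨-involute u, involute v, a, ha, ?_⟩
  simp [e, involute_ι]

theorem isNilpotent_of_mem_radG {x : G 𝔽 p q r} (hx : x ∈ radG 𝔽 p q r) : IsNilpotent x := by
  let ψ := nullScaling (nullProj 𝔽 p q r) (Q_add_nullProj 𝔽 p q r)
  refine isNilpotent_of_coeff_zero_eq_zero (nullScaling_injective _ _) (φ := ψ) ?_
  refine (Submodule.span_le.2 ?_ :
    radG 𝔽 p q r ≤ LinearMap.ker ((lcoeff _ 0).restrictScalars 𝔽 ∘ₗ ψ.toLinearMap)) hx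
  rintro _ ⟨u, v, a, ha, rfl⟩
  simp [ψ, e, nullScaling_ι_of_map_eq _ _ (nullProj_single 𝔽 p q r ha), mul_coeff_zero]

theorem stmt9 :
    Epm 𝔽 p q r * ux 𝔽 p q r ↑(G0 𝔽 p q r ⊔ radG 𝔽 p q r)
      = {T : G 𝔽 p q r | IsUnit T ∧ tw 𝔽 p q r T ∈ ux 𝔽 p q r ↑(G0 𝔽 p q r ⊔ radG 𝔽 p q r)} :=
  (homogeneous_units_mul_subset (mul_mem_radG_left 𝔽 p q r) (fun _ => mul_mem_radG_right 𝔽 p q r)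
      (fun _ => involute_mem_radG 𝔽 p q r) (fun _ => isNilpotent_of_mem_radG 𝔽 p q r)).antisymm
    (subset_homogeneous_units_mul two_ne_zero involute_involute
      (fun _ => isNilpotent_of_mem_radG 𝔽 p q r))

end ClGA
end
end
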